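/- arXiv:1412.7738 — 2 statements merged into one kernel-verified Lean document; each statement's English description precedes it below -/
import Mathlib

section
/- Let V be a finite-dimensional complex vector space, W a finite-dimensional complex vector space, and η : W → End(V) a linear map whose image consists of pairwise commuting endomorphisms. Then the joint generalized eigenvalues are linear: each function u_i in the joint generalized eigenspace decomposition of V with respect to {η(w) : w ∈ W} is given by a linear functional on W. -/
private lemma restrict_pow_coe {V : Type*} [AddCommGroup V] [Module ℂ V]
    {p : Submodule ℂ V} (f : Module.End ℂ V) (h : ∀ x ∈ p, f x ∈ p) :
    ∀ (n : ℕ) (x : p), (((f.restrict h) ^ n) x : V) = (f ^ n) x := by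
  intro n
  induction n with
  | zero => intro x; simp
  | succ n ih =>
    intro x
    rw [pow_succ, pow_succ]
    simp only [Module.End.mul_apply]
    rw [LinearMap.restrict_apply, ih]

private lemma scalar_nilpotent_zero {V : Type*} [AddCommGroup V] [Module ℂ V]
    {p : Submodule ℂ V} (hp : p ≠ ⊥) (κ : ℂ)
    (h : IsNilpotent ((κ • 1 : Module.End ℂ p))) : κ = 0 := by
  obtain ⟨n, hn⟩ := h
  obtain ⟨x, hx, hx0⟩ := Submodule.exists_mem_ne_zero_of_ne_bot hp
  have h2 := LinearMap.congr_fun hn ⟨x, hx⟩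
  rw [smul_pow, one_pow] at h2
  simp only [LinearMap.smul_apply, Module.End.one_apply, LinearMap.zero_apply] at h2
  rcases smul_eq_zero.mp h2 with h | h
  · exact (pow_eq_zero_iff'.mp h).1
  · exact absurd (congrArg Subtype.val h) hx0

/-- Linearity of joint generalized eigenvalues: if `η : W → End V` is linear
with pairwise commuting image, `p` is a nonzero subspace invariant under every
`η w` on which `η w - u w • 1` is nilpotent, then `u : W → ℂ` is linear. -/
theorem stmt_3 (V W : Type*) [AddCommGroup V] [Module ℂ V] [FiniteDimensional ℂ V]
    [AddCommGroup W] [Module ℂ W] [FiniteDimensional ℂ W]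
    (η : W →ₗ[ℂ] Module.End ℂ V)
    (hcomm : ∀ w w', η w * η w' = η w' * η w)
    (p : Submodule ℂ V) (hp : p ≠ ⊥)
    (u : W → ℂ)
    (hinv : ∀ w, ∀ x ∈ p, η w x ∈ p)
    (hnil : ∀ w, ∃ n : ℕ, ∀ x ∈ p, ((η w - u w • 1) ^ n) x = 0) :
    IsLinearMap ℂ u := by
  set e : W → Module.End ℂ p := fun w => (η w).restrict (hinv w) with he
  have hinv' : ∀ w, ∀ x ∈ p, (η w - u w • 1) x ∈ p := by
    intro w x hx
    simp only [LinearMap.sub_apply, LinearMap.smul_apply, Module.End.one_apply]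
    exact Submodule.sub_mem p (hinv w x hx) (Submodule.smul_mem p _ hx)
  have hrestr : ∀ w, (η w - u w • 1).restrict (hinv' w) = e w - u w • 1 := by
    intro w
    ext x
    simp [LinearMap.restrict_apply, he]
  have hnil' : ∀ w, IsNilpotent (e w - u w • 1) := by
    intro w
    obtain ⟨n, hn⟩ := hnil w
    refine ⟨n, ?_⟩
    ext x
    rw [← hrestr w, restrict_pow_coe]
    simpa using hn x x.2
  have hadd : ∀ w w', e (w + w') = e w + e w' := by
    intro w w'; ext x
    simp [he, LinearMap.restrict_apply]
  have hsmul : ∀ (c : ℂ) w, e (c • w) = c • e w := by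
    intro c w; ext x
    simp [he, LinearMap.restrict_apply]
  have hcomm' : ∀ w w', Commute (e w) (e w') := by
    intro w w'
    ext x
    simp only [Module.End.mul_apply, he, LinearMap.restrict_apply]
    exact congrArg (fun f : Module.End ℂ V => f (x : V)) (hcomm w w')
  have hone : ∀ (a : Module.End ℂ p) (c : ℂ), Commute a (c • 1) :=
    fun a c => (Commute.one_right a).smul_right c
  constructor
  · intro w w'
    have hab : IsNilpotent ((e w - u w • 1) + (e w' - u w' • 1)) := by
      apply Commute.isNilpotent_add _ (hnil' w) (hnil' w')
      exact ((hcomm' w w').sub_right (hone _ _)).sub_left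
        ((hone _ _).symm.sub_right (hone _ _))
    have hc : Commute ((e w - u w • 1) + (e w' - u w' • 1))
        (e (w + w') - u (w + w') • 1) := by
      rw [hadd]
      refine Commute.sub_right ?_ (hone _ _)
      refine Commute.add_left ?_ ?_ <;>
        refine Commute.add_right ?_ ?_ <;>
        exact Commute.sub_left (hcomm' _ _) ((hone _ _).symm)
    have hkey : IsNilpotent ((u (w + w') - u w - u w') • (1 : Module.End ℂ p)) := by
      have heq : (u (w + w') - u w - u w') • (1 : Module.End ℂ p)
          = ((e w - u w • 1) + (e w' - u w' • 1)) - (e (w + w') - u (w + w') • 1) := by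
        rw [hadd]; module
      rw [heq]
      exact hc.isNilpotent_sub hab (hnil' (w + w'))
    have h0 := scalar_nilpotent_zero hp _ hkey
    have h1 : u (w + w') - (u w + u w') = 0 := by ring_nf; ring_nf at h0; exact h0
    exact sub_eq_zero.mp h1
  · intro c w
    have ha : IsNilpotent (c • (e w - u w • 1)) := (hnil' w).smul c
    have hc : Commute (c • (e w - u w • 1)) (e (c • w) - u (c • w) • 1) := by
      rw [hsmul]
      refine Commute.smul_left ?_ c
      refine Commute.sub_right ?_ (hone _ _)
      refine Commute.smul_right ?_ c
      exact Commute.sub_left (hcomm' _ _) ((hone _ _).symm)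
    have hkey : IsNilpotent ((u (c • w) - c * u w) • (1 : Module.End ℂ p)) := by
      have heq : (u (c • w) - c * u w) • (1 : Module.End ℂ p)
          = (c • (e w - u w • 1)) - (e (c • w) - u (c • w) • 1) := by
        rw [hsmul]; module
      rw [heq]
      exact hc.isNilpotent_sub ha (hnil' (c • w))
    exact sub_eq_zero.mp (scalar_nilpotent_zero hp _ hkey)
end

section
/- Let V, W be finite-dimensional complex vector spaces and η : W → End(V) linear with commuting image and with η(w) nilpotent for every w ∈ W. Suppose moreover there is a Hermitian inner product on V and on W such that the induced bilinear map satisfies Σ_k η(e_k)·η(e_k)* = Σ_k η(e_k)*·η(e_k) for an orthonormal basis (e_k) of W (i.e., the 'θ∧θ* = 0' condition in the commuting, nilpotent case implies): then η = 0. -/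
/-! Taking `w = w'` in the pointwise `θ ∧ θ* = 0` condition, every `η w` is normal. A normal
operator `A` has `‖A† x‖ = ‖A x‖`, so `A (A x) = 0` forces `A† (A x) = 0` and hence
`‖A x‖² = ⟪A† A x, x⟫ = 0`. Thus `ker A² = ker A`, and a nilpotent normal operator
vanishes. -/

namespace IsStarNormal

open LinearMap

variable {𝕜 E : Type*} [RCLike 𝕜] [NormedAddCommGroup E] [InnerProductSpace 𝕜 E]
  [FiniteDimensional 𝕜 E] {A : E →ₗ[𝕜] E}

theorem norm_adjoint_apply (hA : IsStarNormal A) (x : E) : ‖A.adjoint x‖ = ‖A x‖ := by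
  have hinner : inner 𝕜 (A.adjoint x) (A.adjoint x) = inner 𝕜 (A x) (A x) := by
    calc inner 𝕜 (A.adjoint x) (A.adjoint x) = inner 𝕜 ((A * star A) x) x := by
          rw [star_eq_adjoint, Module.End.mul_apply, adjoint_inner_right]
      _ = inner 𝕜 ((star A * A) x) x := by rw [hA.star_comm_self.eq]
      _ = inner 𝕜 (A x) (A x) := by
          rw [star_eq_adjoint, Module.End.mul_apply, adjoint_inner_left]
  rw [inner_self_eq_norm_sq_to_K, inner_self_eq_norm_sq_to_K] at hinner
  exact (pow_left_inj₀ (norm_nonneg _) (norm_nonneg _) two_ne_zero).mp (by exact_mod_cast hinner)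

theorem apply_eq_zero_of_apply_apply_eq_zero (hA : IsStarNormal A) {x : E}
    (hx : A (A x) = 0) : A x = 0 := by
  have hadj : A.adjoint (A x) = 0 := by
    rw [← norm_eq_zero, hA.norm_adjoint_apply, hx, norm_zero]
  rw [← inner_self_eq_zero (𝕜 := 𝕜), ← adjoint_inner_left, hadj, inner_zero_left]

theorem apply_eq_zero_of_pow_apply_eq_zero (hA : IsStarNormal A) {x : E} (k : ℕ)
    (hx : (A ^ (k + 1)) x = 0) : A x = 0 := by
  induction k with
  | zero => simpa using hx
  | succ k ih =>
    rw [pow_succ', Module.End.mul_apply, pow_succ', Module.End.mul_apply] at hx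
    refine ih ?_
    rw [pow_succ', Module.End.mul_apply]
    exact hA.apply_eq_zero_of_apply_apply_eq_zero hx

theorem eq_zero_of_isNilpotent (hA : IsStarNormal A) (hnil : IsNilpotent A) : A = 0 := by
  obtain ⟨n, hn⟩ := hnil
  ext x
  refine hA.apply_eq_zero_of_pow_apply_eq_zero n ?_
  rw [pow_succ, hn, zero_mul, LinearMap.zero_apply]

end IsStarNormal

theorem stmt_10_general (V W : Type*) [NormedAddCommGroup V] [InnerProductSpace ℂ V]
    [FiniteDimensional ℂ V] [AddCommGroup W] [Module ℂ W]
    (η : W →ₗ[ℂ] (V →ₗ[ℂ] V))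
    (hnil : ∀ w, IsNilpotent (η w))
    (hstar : ∀ w w', η w ∘ₗ LinearMap.adjoint (η w') = LinearMap.adjoint (η w') ∘ₗ η w) :
    η = 0 := by
  ext w : 1
  exact IsStarNormal.eq_zero_of_isNilpotent ⟨(hstar w w).symm⟩ (hnil w)

/-- Pointwise form of Proposition 2.7: if `η : W → End V` is linear with
pairwise commuting image, every `η w` is nilpotent, and
`η w ∘ (η w')* = (η w')* ∘ η w` for all `w, w'` (the pointwise `θ ∧ θ* = 0`
condition), then `η = 0`. -/
theorem stmt_10 (V W : Type*) [NormedAddCommGroup V] [InnerProductSpace ℂ V]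
    [FiniteDimensional ℂ V] [AddCommGroup W] [Module ℂ W] [FiniteDimensional ℂ W]
    (η : W →ₗ[ℂ] (V →ₗ[ℂ] V))
    (hcomm : ∀ w w', η w ∘ₗ η w' = η w' ∘ₗ η w)
    (hnil : ∀ w, IsNilpotent (η w))
    (hstar : ∀ w w', η w ∘ₗ LinearMap.adjoint (η w') = LinearMap.adjoint (η w') ∘ₗ η w) :
    η = 0 :=
  stmt_10_general V W η hnil hstar
end
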